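/- For $s\in(0,1)$, the integral $\int_0^\pi \cos\theta\,(1+\cos\theta)^{2s}(\sin\theta)^{1-2s}\,d\theta$ equals $\frac{2\pi s^2}{\sin(\pi s)}$. -/

import Mathlib

open MeasureTheory Real ProbabilityTheory

/-!
Substituting `u = cos θ` and using `sin² θ = (1 - u)(1 + u)` turns the integral into
`∫_{-1}^1 u (1 + u)^s (1 - u)^(-s) du`. The affine change `u = 2t - 1` together with
`2t - 1 = t - (1 - t)` makes this `2 (B(s + 2, 1 - s) - B(s + 1, 2 - s)) = 2 s² B(s, 1 - s)`,
and `B(s, 1 - s) = Γ(s) Γ(1 - s) = π / sin (π s)` by the reflection formula.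
-/

theorem Complex.ofReal_rpow_mul_one_sub_rpow {x : ℝ} (hx₀ : 0 ≤ x) (hx₁ : x ≤ 1) (a b : ℝ) :
    ((x ^ (a - 1) * (1 - x) ^ (b - 1) : ℝ) : ℂ) =
      (x : ℂ) ^ (a - 1 : ℂ) * (1 - x) ^ (b - 1 : ℂ) := by
  rw [ofReal_mul, ofReal_cpow hx₀, ofReal_cpow (sub_nonneg.2 hx₁)]
  push_cast
  rfl

theorem intervalIntegrable_rpow_mul_one_sub_rpow {a b : ℝ} (ha : 0 < a) (hb : 0 < b) :
    IntervalIntegrable (fun t : ℝ ↦ t ^ (a - 1) * (1 - t) ^ (b - 1)) volume 0 1 := by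
  have h := Complex.betaIntegral_convergent (u := a) (v := b) (by simpa) (by simpa)
  rw [intervalIntegrable_iff_integrableOn_Ioc_of_le zero_le_one] at h ⊢
  refine IntegrableOn.congr_fun h.re (fun x hx ↦ ?_) measurableSet_Ioc
  rw [RCLike.re_to_complex, ← Complex.ofReal_rpow_mul_one_sub_rpow hx.1.le hx.2, Complex.ofReal_re]

theorem integral_rpow_mul_one_sub_rpow {a b : ℝ} (ha : 0 < a) (hb : 0 < b) :
    ∫ t in (0 : ℝ)..1, t ^ (a - 1) * (1 - t) ^ (b - 1) = beta a b := by
  rw [beta_eq_betaIntegralReal a b ha hb, Complex.betaIntegral,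
    intervalIntegral.integral_congr (g := fun x : ℝ ↦ ((x ^ (a - 1) * (1 - x) ^ (b - 1) : ℝ) : ℂ)),
    intervalIntegral.integral_ofReal, Complex.ofReal_re]
  intro x hx
  rw [Set.uIcc_of_le zero_le_one] at hx
  exact (Complex.ofReal_rpow_mul_one_sub_rpow hx.1 hx.2 a b).symm

namespace ProbabilityTheory

theorem beta_add_one_left {a b : ℝ} (ha : a ≠ 0) (hab : a + b ≠ 0) :
    beta (a + 1) b = a / (a + b) * beta a b := by
  rw [beta, beta, add_right_comm, Gamma_add_one ha, Gamma_add_one hab, mul_assoc, mul_div_mul_comm]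

theorem beta_add_one_right {a b : ℝ} (hb : b ≠ 0) (hab : a + b ≠ 0) :
    beta a (b + 1) = b / (a + b) * beta a b := by
  rw [beta, beta, ← add_assoc, Gamma_add_one hb, Gamma_add_one hab, mul_left_comm,
    mul_div_mul_comm]

theorem beta_one_sub (s : ℝ) : beta s (1 - s) = π / sin (π * s) := by
  rw [beta, Gamma_mul_Gamma_one_sub, add_sub_cancel, Gamma_one, div_one]

end ProbabilityTheory

theorem Real.image_cos_Ioo : cos '' Set.Ioo 0 π = Set.Ioo (-1) 1 :=
  cosPartialHomeomorph.image_source_eq_target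

theorem integral_Ioo_sin_smul_comp_cos {E : Type*} [NormedAddCommGroup E] [NormedSpace ℝ E]
    (f : ℝ → E) : ∫ θ in Set.Ioo 0 π, sin θ • f (cos θ) = ∫ u in (-1)..1, f u := by
  rw [intervalIntegral.integral_of_le (by norm_num), integral_Ioc_eq_integral_Ioo,
    ← Real.image_cos_Ioo, integral_image_eq_integral_abs_deriv_smul measurableSet_Ioo
      (fun θ _ ↦ (hasDerivAt_cos θ).hasDerivWithinAt) cosPartialHomeomorph.injOn]
  refine setIntegral_congr_fun measurableSet_Ioo fun θ hθ ↦ ?_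
  rw [abs_neg, abs_of_pos (sin_pos_of_pos_of_lt_pi hθ.1 hθ.2)]

theorem cos_mul_one_add_cos_rpow_mul_sin_rpow {θ : ℝ} (hθ : θ ∈ Set.Ioo 0 π) (s : ℝ) :
    cos θ * (1 + cos θ) ^ (2 * s) * sin θ ^ (1 - 2 * s) =
      sin θ * (cos θ * ((1 + cos θ) ^ s * (1 - cos θ) ^ (-s))) := by
  obtain ⟨hc₀, hc₁⟩ := mapsTo_cos_Ioo hθ
  have hsin : 0 < sin θ := sin_pos_of_pos_of_lt_pi hθ.1 hθ.2
  have hplus : 0 < 1 + cos θ := by linarith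
  have hminus : 0 < 1 - cos θ := by linarith
  have hsin_rpow : sin θ ^ (-(2 * s)) = (1 - cos θ) ^ (-s) * (1 + cos θ) ^ (-s) := by
    rw [← mul_rpow hminus.le hplus.le, neg_mul_eq_mul_neg, rpow_mul hsin.le, rpow_two, sin_sq]
    ring_nf
  rw [sub_eq_add_neg, rpow_add hsin, rpow_one, hsin_rpow, two_mul, rpow_add hplus,
    rpow_neg hplus.le]
  field_simp

theorem integral_two_mul_sub_one_mul_rpow_mul_one_sub_rpow {s : ℝ} (hs : -1 < s) (hs1 : s < 1) :
    ∫ t in (0 : ℝ)..1, (2 * t - 1) * (t ^ s * (1 - t) ^ (-s)) = s * beta (s + 1) (1 - s) := by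
  have hsplit : ∀ t ∈ Set.uIcc (0 : ℝ) 1, (2 * t - 1) * (t ^ s * (1 - t) ^ (-s)) =
      t ^ (s + 2 - 1) * (1 - t) ^ (1 - s - 1) - t ^ (s + 1 - 1) * (1 - t) ^ (2 - s - 1) := by
    intro t ht
    rw [Set.uIcc_of_le zero_le_one] at ht
    rw [show s + 2 - 1 = s + 1 by ring, show 1 - s - 1 = -s by ring, add_sub_cancel_right,
      show 2 - s - 1 = -s + 1 by ring, rpow_add' ht.1 (by linarith),
      rpow_add' (sub_nonneg.2 ht.2) (by linarith), rpow_one, rpow_one]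
    ring
  rw [intervalIntegral.integral_congr hsplit, intervalIntegral.integral_sub
      (intervalIntegrable_rpow_mul_one_sub_rpow (by linarith) (by linarith))
      (intervalIntegrable_rpow_mul_one_sub_rpow (by linarith) (by linarith)),
    integral_rpow_mul_one_sub_rpow (by linarith) (by linarith),
    integral_rpow_mul_one_sub_rpow (by linarith) (by linarith),
    show s + 2 = s + 1 + 1 by ring, show 2 - s = 1 - s + 1 by ring,
    beta_add_one_left (by linarith) (by linarith), beta_add_one_right (by linarith) (by linarith)]
  ring

theorem integral_mul_one_add_rpow_mul_one_sub_rpow_neg {s : ℝ} (hs : -1 < s) (hs1 : s < 1) :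
    ∫ u in (-1 : ℝ)..1, u * ((1 + u) ^ s * (1 - u) ^ (-s)) =
      2 * (s * beta (s + 1) (1 - s)) := by
  calc ∫ u in (-1 : ℝ)..1, u * ((1 + u) ^ s * (1 - u) ^ (-s))
      = 2 * ∫ t in (0 : ℝ)..1,
          (2 * t - 1) * ((1 + (2 * t - 1)) ^ s * (1 - (2 * t - 1)) ^ (-s)) := by
        rw [← smul_eq_mul, intervalIntegral.smul_integral_comp_mul_sub
          (fun u ↦ u * ((1 + u) ^ s * (1 - u) ^ (-s)))]
        norm_num
    _ = 2 * ∫ t in (0 : ℝ)..1, (2 * t - 1) * (t ^ s * (1 - t) ^ (-s)) := by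
        congr 1
        refine intervalIntegral.integral_congr fun t ht ↦ ?_
        rw [Set.uIcc_of_le zero_le_one] at ht
        rw [show 1 + (2 * t - 1) = 2 * t by ring, show 1 - (2 * t - 1) = 2 * (1 - t) by ring,
          mul_rpow zero_le_two ht.1, mul_rpow zero_le_two (sub_nonneg.2 ht.2),
          rpow_neg zero_le_two]
        field_simp
    _ = 2 * (s * beta (s + 1) (1 - s)) := by
        rw [integral_two_mul_sub_one_mul_rpow_mul_one_sub_rpow hs hs1]

/-- For `s ∈ (0,1)`,
`∫_0^π cos θ (1+cos θ)^{2s} (sin θ)^{1-2s} dθ = 2π s²/sin(πs)`. -/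
theorem stmt_10 (s : ℝ) (hs : 0 < s) (hs1 : s < 1) :
    ∫ θ in Set.Ioo (0 : ℝ) π,
        Real.cos θ * (1 + Real.cos θ) ^ (2 * s) * (Real.sin θ) ^ (1 - 2 * s) =
      2 * π * s ^ 2 / Real.sin (π * s) := by
  calc ∫ θ in Set.Ioo (0 : ℝ) π, cos θ * (1 + cos θ) ^ (2 * s) * sin θ ^ (1 - 2 * s)
      = ∫ θ in Set.Ioo (0 : ℝ) π, sin θ • (fun u ↦ u * ((1 + u) ^ s * (1 - u) ^ (-s))) (cos θ) :=
        setIntegral_congr_fun measurableSet_Ioo fun θ hθ ↦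
          cos_mul_one_add_cos_rpow_mul_sin_rpow hθ s
    _ = 2 * (s * beta (s + 1) (1 - s)) :=
        (integral_Ioo_sin_smul_comp_cos _).trans
          (integral_mul_one_add_rpow_mul_one_sub_rpow_neg (by linarith) hs1)
    _ = 2 * (s * (s * beta s (1 - s))) := by
        rw [beta_add_one_left hs.ne' (by simp), add_sub_cancel, div_one]
    _ = 2 * π * s ^ 2 / sin (π * s) := by
        rw [beta_one_sub]
        ring
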